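/- Let (X, d) be a metric space admitting a metric Z-structure (X̂, Z). Then Z has finite Lebesgue covering dimension. Moreover, dim Z ≤ k − 1 where k is the order of the uniformly bounded cover of X produced from the cocompact isometric action. -/

import Mathlib

open Metric Set unitInterval TopologicalSpace Pointwise

/-- A separable metric space is an absolute retract (AR) if whenever it is embedded as a
closed subset of a separable metric space, it is a retract of that space. -/
def IsAR (W : Type) [MetricSpace W] : Prop :=
  SeparableSpace W ∧
    ∀ (Y : Type) [MetricSpace Y] [SeparableSpace Y] (f : W → Y),
      Topology.IsClosedEmbedding f → ∃ r : Y → W, Continuous r ∧ ∀ w, r (f w) = w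

/-- A family of sets has order at most `m` if every point lies in at most `m` members. -/
def OrderLE {X : Type*} (𝒰 : Set (Set X)) (m : ℕ) : Prop :=
  ∀ x : X, ∀ F : Finset (Set X), ↑F ⊆ 𝒰 → (∀ U ∈ F, x ∈ U) → F.card ≤ m

/-- A compact subset `Z` of a metric space has covering dimension at most `n` if for every
`ε > 0` there is a cover of `Z` by relatively open subsets of `Z` of mesh `< ε` and order at
most `n + 1`. -/
def SubsetCovDimLE {X : Type*} [MetricSpace X] (Z : Set X) (n : ℕ) : Prop :=
  ∀ ε : ℝ, 0 < ε → ∃ 𝒲 : Set (Set X), (∀ W ∈ 𝒲, ∃ O : Set X, IsOpen O ∧ W = O ∩ Z) ∧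
    Z ⊆ ⋃₀ 𝒲 ∧ OrderLE 𝒲 (n + 1) ∧ ∀ W ∈ 𝒲, Metric.diam W < ε

/-!
Fix a maximal `1`-separated net `N` of `X`. A cocompact isometric action gives `X` bounded
geometry: every ball of radius `1` contains at most `M` points of `N`, so the balls `B(p, 1)`,
`p ∈ N`, form a uniformly bounded open cover of `X` of order at most `M`.

To cover `Z` at scale `ε`, nullity gives a compact `C ⊆ X` such that the balls `B(p, 1)` far
from `C` have diameter `< ε / 4` in `X̂`. Run the Z-set homotopy for a time so short that no
point moves by `ε / 4` or by the distance from `Z` to the image of a neighbourhood of `C`.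
This pushes `Z` into the far part of `X`, so the preimages of the small balls `i(B(p, 1))`
cover `Z`, have mesh `< ε`, and inherit order at most `M` from the balls themselves.
-/

open Topology

theorem orderLE_image {ι X : Type*} (V : ι → Set X) (s : Set ι) {m : ℕ}
    (h : ∀ x, ∀ S : Finset ι, ↑S ⊆ s → (∀ p ∈ S, x ∈ V p) → S.card ≤ m) :
    OrderLE (V '' s) m := by
  classical
  intro x F hF hxF
  obtain ⟨S, hSs, rfl⟩ := Finset.subset_set_image_iff.1 hF
  exact Finset.card_image_le.trans
    (h x S hSs fun p hp => hxF (V p) (Finset.mem_image_of_mem V hp))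

section SeparatedNets

variable {X : Type*} [MetricSpace X]

theorem exists_pairwise_le_dist_forall_exists_dist_lt {r : ℝ} (hr : 0 < r) :
    ∃ N : Set X, N.Pairwise (fun p q => r ≤ dist p q) ∧ ∀ x, ∃ p ∈ N, dist x p < r := by
  obtain ⟨N, hN⟩ := zorn_subset {A : Set X | A.Pairwise fun p q => r ≤ dist p q}
    fun c hc hchain => ⟨⋃₀ c, (pairwise_sUnion hchain.directedOn).2 hc,
      fun _ => subset_sUnion_of_mem⟩
  refine ⟨N, hN.prop, fun x => ?_⟩
  by_contra! hfar
  have hins : (insert x N).Pairwise fun p q => r ≤ dist p q :=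
    hN.prop.insert fun p hp _ => ⟨hfar p hp, dist_comm x p ▸ hfar p hp⟩
  have hxN : x ∈ N := hN.2 hins (subset_insert x N) (mem_insert x N)
  exact absurd (hfar x hxN) (by simpa using hr)

theorem TotallyBounded.exists_card_le_of_pairwise_le_dist {s : Set X} (hs : TotallyBounded s)
    {δ : ℝ} (hδ : 0 < δ) :
    ∃ M : ℕ, ∀ F : Finset X, ↑F ⊆ s → (F : Set X).Pairwise (fun p q => δ ≤ dist p q) →
      F.card ≤ M := by
  classical
  obtain ⟨t, htfin, hst⟩ := Metric.totallyBounded_iff.1 hs (δ / 2) (half_pos hδ)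
  refine ⟨htfin.toFinset.card, fun F hFs hF => ?_⟩
  have hnear : ∀ p ∈ F, ∃ y ∈ t, dist p y < δ / 2 := fun p hp => by
    simpa using hst (hFs hp)
  choose! f hft hfp using hnear
  refine Finset.card_le_card_of_injOn f (fun p hp => by simpa using hft p hp) ?_
  intro p hp q hq hpq
  by_contra hne
  have : dist p q < δ := calc
    dist p q ≤ dist p (f p) + dist q (f q) := by rw [hpq]; exact dist_triangle_right p q (f q)
    _ < δ / 2 + δ / 2 := add_lt_add (hfp p hp) (hfp q hq)
    _ = δ := add_halves δ
  exact absurd (hF hp hq hne) (not_le.2 this)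

theorem exists_card_le_of_isCompact_smul_cover [ProperSpace X] {G : Type*} [Group G]
    [MulAction G X] [IsIsometricSMul G X] {K : Set X} (hK : IsCompact K)
    (hcov : ∀ x : X, ∃ g : G, ∃ k ∈ K, x = g • k) (R : ℝ) {δ : ℝ} (hδ : 0 < δ) :
    ∃ M : ℕ, ∀ (x : X) (F : Finset X), (∀ p ∈ F, dist x p < R) →
      (F : Set X).Pairwise (fun p q => δ ≤ dist p q) → F.card ≤ M := by
  classical
  obtain ⟨M, hM⟩ :=
    (hK.cthickening (r := R)).totallyBounded.exists_card_le_of_pairwise_le_dist hδ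
  refine ⟨M, fun x F hxF hF => ?_⟩
  obtain ⟨g, k, hk, rfl⟩ := hcov x
  rw [← Finset.card_image_of_injective F (MulAction.injective g⁻¹)]
  refine hM _ ?_ ?_
  · simp only [Finset.coe_image, image_subset_iff]
    intro p hp
    refine mem_cthickening_of_dist_le _ k R K hk ?_
    rw [← dist_smul g, smul_inv_smul, dist_comm]
    exact (hxF p hp).le
  · simp only [Finset.coe_image]
    rintro _ ⟨p, hp, rfl⟩ _ ⟨q, hq, rfl⟩ hne
    rw [dist_smul]
    exact hF hp hq fun h => hne (h ▸ rfl)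

end SeparatedNets

theorem exists_pos_forall_dist_homotopy_lt {Y : Type*} [MetricSpace Y] [CompactSpace Y]
    {H : Y × I → Y} (hH : Continuous H) (hH0 : ∀ y, H (y, 0) = y) {c : ℝ} (hc : 0 < c) :
    ∃ t : I, 0 < t ∧ ∀ y, dist (H (y, t)) y < c := by
  have hev : ∀ᶠ t in 𝓝 (0 : I), ∀ y ∈ univ, dist (H (y, t)) y < c :=
    isCompact_univ.eventually_forall_of_forall_eventually fun y _ =>
      ((hH.comp continuous_swap).dist continuous_snd).continuousAt.eventually_lt continuousAt_const
        (by simpa [hH0] using hc)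
  have : (𝓝[>] (0 : I)).NeBot := nhdsGT_neBot_of_exists_gt ⟨1, zero_lt_one⟩
  obtain ⟨t, ht, htpos⟩ := ((hev.filter_mono nhdsWithin_le_nhds).and
    (self_mem_nhdsWithin : Ioi (0 : I) ∈ 𝓝[>] 0)).exists
  exact ⟨t, htpos, fun y => ht y trivial⟩

theorem exists_isCompact_forall_diam_image_ball_lt {X Y G : Type*} [MetricSpace X]
    [ProperSpace X] [Group G] [MulAction G X] [IsIsometricSMul G X] [MetricSpace Y]
    [BoundedSpace Y] {K : Set X} (hK : Bornology.IsBounded K)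
    (hcov : ∀ x : X, ∃ g : G, ∃ k ∈ K, x = g • k) {i : X → Y}
    (hnull : ∀ ε : ℝ, 0 < ε → ∀ U : Set X, Bornology.IsBounded U →
      ∃ C : Set X, IsCompact C ∧ ∀ g : G, (g • U) ∩ C = ∅ → diam (i '' (g • U)) < ε)
    (r : ℝ) {δ : ℝ} (hδ : 0 < δ) :
    ∃ C : Set X, IsCompact C ∧ ∀ p ∉ C, diam (i '' ball p r) < δ := by
  set U := cthickening r K
  have hU : Bornology.IsBounded U := hK.cthickening
  obtain ⟨C, hC, hCU⟩ := hnull δ hδ U hU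
  refine ⟨cthickening (diam U) C, hC.cthickening, fun p hp => ?_⟩
  obtain ⟨g, k, hk, rfl⟩ := hcov p
  have hball : ball (g • k) r ⊆ g • U := by
    rw [← Metric.smul_ball]
    exact smul_set_mono (ball_subset_closedBall.trans (closedBall_subset_cthickening hk r))
  have hdisj : g • U ∩ C = ∅ := by
    refine eq_empty_of_forall_notMem fun y ⟨hyU, hyC⟩ => hp ?_
    obtain ⟨u, hu, rfl⟩ := hyU
    refine mem_cthickening_of_dist_le _ _ _ C hyC ?_
    rw [dist_smul]
    exact dist_le_diam_of_mem hU (self_subset_cthickening K hk) hu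
  exact (diam_mono (image_mono hball) (Bornology.IsBounded.all _)).trans_lt (hCU g hdisj)

theorem diam_le_of_mapsTo_of_dist_le {Y : Type*} [PseudoMetricSpace Y] {Φ : Y → Y}
    {s A : Set Y} {c : ℝ} (hs : MapsTo Φ s A) (hA : Bornology.IsBounded A) (hc : 0 ≤ c)
    (hΦ : ∀ y ∈ s, dist (Φ y) y ≤ c) : diam s ≤ diam A + 2 * c := by
  refine diam_le_of_forall_dist_le (by positivity) fun y hy y' hy' => ?_
  linarith [dist_triangle4 y (Φ y) (Φ y') y', dist_comm y (Φ y), hΦ y hy, hΦ y' hy',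
    dist_le_diam_of_mem hA (hs hy) (hs hy')]

theorem subsetCovDimLE_of_forall_exists_push {X Y : Type*} [MetricSpace X] [ProperSpace X]
    [MetricSpace Y] [BoundedSpace Y] {Z : Set Y} (hZ : IsClosed Z) {i : X → Y}
    (hi : Topology.IsOpenEmbedding i) (hiZ : ∀ x, i x ∉ Z)
    (hpush : ∀ c > 0, ∃ Φ : Y → Y, Continuous Φ ∧ ∀ y, Φ y ∈ range i ∧ dist (Φ y) y < c)
    {N : Set X} {r : ℝ} (hN : ∀ x, ∃ p ∈ N, dist x p < r) {M : ℕ}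
    (hcount : ∀ x (S : Finset X), ↑S ⊆ N → (∀ p ∈ S, dist x p < r) → S.card ≤ M)
    (hsmall : ∀ δ > 0, ∃ C : Set X, IsCompact C ∧ ∀ p ∉ C, diam (i '' ball p r) < δ) :
    SubsetCovDimLE Z (M - 1) := by
  intro ε hε
  set δ := ε / 4 with hδ
  obtain ⟨C, hC, hCsmall⟩ := hsmall δ (by positivity)
  obtain ⟨η, hη, hηZ⟩ := (hC.cthickening.image hi.continuous).exists_thickening_subset_open
    hZ.isOpen_compl (image_subset_iff.2 fun x _ => hiZ x)
  obtain ⟨Φ, hΦc, hΦ⟩ := hpush (min δ η) (lt_min (by positivity) hη)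
  refine ⟨(fun p => Φ ⁻¹' (i '' ball p r) ∩ Z) '' {p ∈ N | diam (i '' ball p r) < δ},
    ?_, ?_, ?_, ?_⟩
  · rintro _ ⟨p, -, rfl⟩
    exact ⟨_, (hi.isOpenMap _ isOpen_ball).preimage hΦc, rfl⟩
  · intro z hz
    obtain ⟨⟨x, hx⟩, hxz⟩ := hΦ z
    have hxC : x ∉ cthickening r C := by
      refine fun hxC => hηZ (mem_thickening_iff.2 ⟨i x, mem_image_of_mem i hxC, ?_⟩) hz
      rw [dist_comm, hx]
      exact hxz.trans_le (min_le_right _ _)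
    obtain ⟨p, hpN, hxp⟩ := hN x
    have hpC : p ∉ C := fun hpC => hxC (mem_cthickening_of_dist_le x p r C hpC hxp.le)
    exact mem_sUnion_of_mem (⟨⟨x, mem_ball.2 hxp, hx⟩, hz⟩ : z ∈ Φ ⁻¹' (i '' ball p r) ∩ Z)
      ⟨p, ⟨hpN, hCsmall p hpC⟩, rfl⟩
  · refine orderLE_image _ _ fun w S hS hwS => ?_
    obtain ⟨⟨x, hx⟩, -⟩ := hΦ w
    have hxS : ∀ p ∈ S, dist x p < r := fun p hp => by
      obtain ⟨⟨y, hy, hyw⟩, -⟩ := hwS p hp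
      rw [← hi.injective (hyw.trans hx.symm)]
      exact hy
    exact (hcount x S (fun p hp => (hS hp).1) hxS).trans (by omega)
  · rintro _ ⟨p, ⟨-, hp⟩, rfl⟩
    calc diam (Φ ⁻¹' (i '' ball p r) ∩ Z) ≤ diam (i '' ball p r) + 2 * δ :=
          diam_le_of_mapsTo_of_dist_le (fun y hy => hy.1) (Bornology.IsBounded.all _)
            (by positivity) fun y _ => ((hΦ y).2.trans_le (min_le_left _ _)).le
      _ < ε := by linarith

theorem boundary_finite_dimensional_general
    (Xhat : Type) [MetricSpace Xhat] [CompactSpace Xhat]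
    (Z : Set Xhat) (hZ : IsClosed Z)
    (H : Xhat × I → Xhat) (hHc : Continuous H)
    (hH0 : ∀ x : Xhat, H (x, 0) = x)
    (hHt : ∀ t : I, 0 < t → ∀ x : Xhat, H (x, t) ∉ Z)
    (X : Type) [MetricSpace X] [ProperSpace X]
    (i : X → Xhat) (hi : Topology.IsOpenEmbedding i) (hrange : Set.range i = Zᶜ)
    (G : Type) [Group G] [MulAction G X] [IsIsometricSMul G X]
    (hcocompact : ∃ K : Set X, IsCompact K ∧ ∀ x : X, ∃ g : G, ∃ k ∈ K, x = g • k)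
    (hnull : ∀ ε : ℝ, 0 < ε → ∀ U : Set X, Bornology.IsBounded U →
      ∃ C : Set X, IsCompact C ∧ ∀ g : G, (g • U) ∩ C = ∅ →
        Metric.diam (i '' (g • U)) < ε) :
    ∃ k : ℕ, (∃ 𝒰 : Set (Set X), (∀ U ∈ 𝒰, IsOpen U) ∧ ⋃₀ 𝒰 = univ ∧
        (∃ R : ℝ, ∀ U ∈ 𝒰, Metric.diam U ≤ R) ∧ OrderLE 𝒰 k) ∧
      SubsetCovDimLE Z (k - 1) := by
  obtain ⟨K, hK, hKcov⟩ := hcocompact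
  obtain ⟨N, hNsep, hN⟩ := exists_pairwise_le_dist_forall_exists_dist_lt (X := X) one_pos
  obtain ⟨M, hM⟩ := exists_card_le_of_isCompact_smul_cover hK hKcov 1 one_pos
  have hcount : ∀ x (S : Finset X), ↑S ⊆ N → (∀ p ∈ S, dist x p < 1) → S.card ≤ M :=
    fun x S hS hxS => hM x S hxS (hNsep.mono hS)
  have hpush : ∀ c > 0, ∃ Φ : Xhat → Xhat, Continuous Φ ∧
      ∀ y, Φ y ∈ range i ∧ dist (Φ y) y < c := fun c hc => by
    obtain ⟨t, ht, htc⟩ := exists_pos_forall_dist_homotopy_lt hHc hH0 hc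
    exact ⟨fun y => H (y, t), hHc.comp (continuous_id.prodMk continuous_const),
      fun y => ⟨hrange ▸ hHt t ht y, htc y⟩⟩
  refine ⟨M, ⟨(ball · 1) '' N, ?_, ?_, ⟨2, ?_⟩, ?_⟩, ?_⟩
  · rintro _ ⟨p, -, rfl⟩
    exact isOpen_ball
  · refine eq_univ_of_forall fun x => ?_
    obtain ⟨p, hp, hxp⟩ := hN x
    exact ⟨ball p 1, mem_image_of_mem _ hp, mem_ball.2 hxp⟩
  · rintro _ ⟨p, -, rfl⟩
    simpa using diam_ball (x := p) zero_le_one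
  · exact orderLE_image _ _ hcount
  · have hiZ (x : X) : i x ∉ Z := (hrange ▸ mem_range_self x : i x ∈ Zᶜ)
    exact subsetCovDimLE_of_forall_exists_push hZ hi hiZ hpush hN hcount fun δ hδ =>
        exists_isCompact_forall_diam_image_ball_lt hK.isBounded hKcov hnull 1 hδ

/-- **Theorem A.** If a proper metric space `(X, d)` admits a metric Z-structure
`(Xhat, Z)` — `Xhat` a compact AR which is a Z-compactification of `X = Xhat \ Z`, with a
cocompact isometric `G`-action on `X` satisfying the nullity condition — then `Z` has
finite covering dimension; indeed `dim Z ≤ k - 1` where `k` is the order of a uniformly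
bounded open cover of `X` produced from the cocompact isometric action. -/
theorem boundary_finite_dimensional
    (Xhat : Type) [MetricSpace Xhat] [CompactSpace Xhat] (hAR : IsAR Xhat)
    (Z : Set Xhat) (hZ : IsClosed Z)
    (H : Xhat × I → Xhat) (hHc : Continuous H)
    (hH0 : ∀ x : Xhat, H (x, 0) = x)
    (hHt : ∀ t : I, 0 < t → ∀ x : Xhat, H (x, t) ∉ Z)
    (X : Type) [MetricSpace X] [ProperSpace X]
    (i : X → Xhat) (hi : Topology.IsOpenEmbedding i) (hrange : Set.range i = Zᶜ)
    (G : Type) [Group G] [MulAction G X] [IsIsometricSMul G X]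
    (hcocompact : ∃ K : Set X, IsCompact K ∧ ∀ x : X, ∃ g : G, ∃ k ∈ K, x = g • k)
    (hnull : ∀ ε : ℝ, 0 < ε → ∀ U : Set X, Bornology.IsBounded U →
      ∃ C : Set X, IsCompact C ∧ ∀ g : G, (g • U) ∩ C = ∅ →
        Metric.diam (i '' (g • U)) < ε) :
    ∃ k : ℕ, (∃ 𝒰 : Set (Set X), (∀ U ∈ 𝒰, IsOpen U) ∧ ⋃₀ 𝒰 = univ ∧
        (∃ R : ℝ, ∀ U ∈ 𝒰, Metric.diam U ≤ R) ∧ OrderLE 𝒰 k) ∧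
      SubsetCovDimLE Z (k - 1) :=
  boundary_finite_dimensional_general Xhat Z hZ H hHc hH0 hHt X i hi hrange G hcocompact hnull
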